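/- arXiv:1312.2529 — 3 statements merged into one kernel-verified Lean document; each statement's English description precedes it below -/
import Mathlib

section
/- Let l_0 ≥ l_1 ≥ … ≥ l_s be positive integers and let F be the set of functions f : {1,…,l_0} → {0,1,…,s} such that for every 1 ≤ i ≤ s, |{r : f(r) ≥ i}| ≤ l_i. Then |F| ≤ ∏_{i=1}^s (e·l_{i−1}/l_i)^{l_i}. -/
open Finset

lemma subsets_card_le (R : Type) [Fintype R] [DecidableEq R] (k : ℕ) :
    Fintype.card {A : Finset R // A.card ≤ k} ≤
      ∑ j ∈ range (k + 1), (Fintype.card R).choose j := by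
  classical
  rw [Fintype.card_subtype]
  have hsub : (univ.filter (fun A : Finset R => A.card ≤ k)) ⊆
      (range (k + 1)).biUnion (fun j => univ.filter (fun A : Finset R => A.card = j)) := by
    intro A hA
    rw [mem_filter] at hA
    exact mem_biUnion.mpr ⟨A.card, mem_range.mpr (by omega), mem_filter.mpr ⟨mem_univ _, rfl⟩⟩
  refine (Finset.card_le_card hsub).trans ?_
  refine Finset.card_biUnion_le.trans (Finset.sum_le_sum fun j _ => ?_)
  rw [← Fintype.card_subtype]
  rw [Fintype.card_finset_len]

lemma count_le (s : ℕ) : ∀ (l : ℕ → ℕ) (R : Type) [Fintype R],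
    Fintype.card R ≤ l 0 →
    Nat.card {f : R → Fin (s + 1) //
        ∀ i, 1 ≤ i → i ≤ s → Nat.card {r : R // i ≤ (f r : ℕ)} ≤ l i}
      ≤ ∏ i ∈ Icc 1 s, ∑ j ∈ range (l i + 1), (l (i - 1)).choose j := by
  induction s with
  | zero =>
    intro l R _ _
    have : Subsingleton {f : R → Fin 1 //
        ∀ i, 1 ≤ i → i ≤ 0 → Nat.card {r : R // i ≤ (f r : ℕ)} ≤ l i} :=
      ⟨fun a b => Subtype.ext (funext fun r => Subsingleton.elim _ _)⟩
    have h := Nat.card_le_card_of_injective (fun _ : {f : R → Fin 1 //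
        ∀ i, 1 ≤ i → i ≤ 0 → Nat.card {r : R // i ≤ (f r : ℕ)} ≤ l i} => (() : Unit))
      (fun a b _ => Subsingleton.elim a b)
    simpa using h
  | succ s ih =>
    intro l R _ hR
    classical
    set l' : ℕ → ℕ := fun i => l (i + 1) with hl'
    set F := {f : R → Fin (s + 2) //
        ∀ i, 1 ≤ i → i ≤ s + 1 → Nat.card {r : R // i ≤ (f r : ℕ)} ≤ l i} with hF
    set T := Σ A : {A : Finset R // A.card ≤ l 1},
        {g : {x // x ∈ A.1} → Fin (s + 1) //
          ∀ i, 1 ≤ i → i ≤ s → Nat.card {r : {x // x ∈ A.1} // i ≤ (g r : ℕ)} ≤ l' i} with hT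
    -- the map
    have cardsub : ∀ (p : R → Prop) [DecidablePred p],
        Nat.card {r : R // p r} = (univ.filter p).card := by
      intro p _
      rw [Nat.card_eq_fintype_card, Fintype.card_subtype]
    have Φprop : ∀ f : F, ∃ t : T,
        ∀ r : R, f.1 r = if h : r ∈ t.1.1 then (t.2.1 ⟨r, h⟩).succ else 0 := by
      rintro ⟨f, hf⟩
      set A : Finset R := univ.filter (fun r => 1 ≤ (f r : ℕ)) with hA
      have hAcard : A.card ≤ l 1 := by
        rw [hA, ← cardsub]
        exact hf 1 le_rfl (by omega)
      set g : {x // x ∈ A} → Fin (s + 1) :=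
        fun x => ⟨(f x.1 : ℕ) - 1, by have := (f x.1).isLt; omega⟩ with hg
      have hgmem : ∀ x : {x // x ∈ A}, 1 ≤ (f x.1 : ℕ) := by
        intro x
        exact (mem_filter.mp x.2).2
      have hgc : ∀ i, 1 ≤ i → i ≤ s →
          Nat.card {r : {x // x ∈ A} // i ≤ (g r : ℕ)} ≤ l' i := by
        intro i hi1 his
        have hinj : Function.Injective
            (fun r : {r : {x // x ∈ A} // i ≤ (g r : ℕ)} =>
              (⟨r.1.1, by
                have h1 := hgmem r.1
                have h2 := r.2
                simp only [hg] at h2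
                omega⟩ : {r : R // i + 1 ≤ (f r : ℕ)})) := by
          intro a b hab
          have h' := congrArg Subtype.val hab
          simp only at h'
          exact Subtype.ext (Subtype.ext h')
        calc Nat.card {r : {x // x ∈ A} // i ≤ (g r : ℕ)}
            ≤ Nat.card {r : R // i + 1 ≤ (f r : ℕ)} :=
              Nat.card_le_card_of_injective _ hinj
          _ ≤ l (i + 1) := hf (i + 1) (by omega) (by omega)
      refine ⟨⟨⟨A, hAcard⟩, ⟨g, hgc⟩⟩, fun r => ?_⟩
      by_cases hr : r ∈ A
      · rw [dif_pos hr]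
        have h1 : 1 ≤ (f r : ℕ) := hgmem ⟨r, hr⟩
        apply Fin.ext
        simp only [Fin.val_succ, hg]
        omega
      · rw [dif_neg hr]
        have : ¬ 1 ≤ (f r : ℕ) := by
          intro h
          exact hr (by rw [hA, mem_filter]; exact ⟨mem_univ _, h⟩)
        apply Fin.ext
        simp only [Fin.val_zero]
        omega
    choose Φ hΦ using Φprop
    have hΦinj : Function.Injective Φ := by
      intro a b hab
      apply Subtype.ext
      funext r
      rw [hΦ a r, hΦ b r, hab]
    have step1 : Nat.card F ≤ Nat.card T := Nat.card_le_card_of_injective Φ hΦinj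
    -- compute Nat.card T
    letI : ∀ A : {A : Finset R // A.card ≤ l 1}, Fintype
        {g : {x // x ∈ A.1} → Fin (s + 1) //
          ∀ i, 1 ≤ i → i ≤ s → Nat.card {r : {x // x ∈ A.1} // i ≤ (g r : ℕ)} ≤ l' i} :=
      fun A => Fintype.ofFinite _
    set M := ∏ i ∈ Icc 1 s, ∑ j ∈ range (l' i + 1), (l' (i - 1)).choose j with hM
    have step2 : Nat.card T ≤ Fintype.card {A : Finset R // A.card ≤ l 1} * M := by
      rw [Nat.card_eq_fintype_card, Fintype.card_sigma]
      have : ∀ A : {A : Finset R // A.card ≤ l 1}, Fintype.card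
          {g : {x // x ∈ A.1} → Fin (s + 1) //
            ∀ i, 1 ≤ i → i ≤ s → Nat.card {r : {x // x ∈ A.1} // i ≤ (g r : ℕ)} ≤ l' i}
          ≤ M := by
        intro A
        rw [← Nat.card_eq_fintype_card]
        exact ih l' {x // x ∈ A.1} (by rw [Fintype.card_coe]; exact A.2)
      calc ∑ A : {A : Finset R // A.card ≤ l 1}, _ ≤
          ∑ _A : {A : Finset R // A.card ≤ l 1}, M := Finset.sum_le_sum fun A _ => this A
        _ = _ := by rw [Finset.sum_const, smul_eq_mul, Finset.card_univ]
    have step3 : Fintype.card {A : Finset R // A.card ≤ l 1}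
        ≤ ∑ j ∈ range (l 1 + 1), (l 0).choose j := by
      refine (subsets_card_le R (l 1)).trans (Finset.sum_le_sum fun j _ => ?_)
      exact Nat.choose_le_choose j hR
    -- reindex the product
    have hprod : (∑ j ∈ range (l 1 + 1), (l 0).choose j) * M
        = ∏ i ∈ Icc 1 (s + 1), ∑ j ∈ range (l i + 1), (l (i - 1)).choose j := by
      have e1 : ∀ (t : ℕ → ℕ) (n : ℕ), ∏ i ∈ Icc 1 n, t i = ∏ i ∈ range n, t (1 + i) := by
        intro t n
        rw [← Finset.Ico_add_one_right_eq_Icc, Finset.prod_Ico_eq_prod_range]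
        simp
      rw [hM, e1 _ (s + 1), e1 _ s, Finset.prod_range_succ']
      rw [mul_comm]
      refine congrArg₂ (· * ·) ?_ ?_
      · refine Finset.prod_congr rfl fun i _ => ?_
        have e2 : l' (1 + i) = l (1 + (i + 1)) := by
          simp only [hl']; congr 1 <;> omega
        have e3 : l' (1 + i - 1) = l (1 + (i + 1) - 1) := by
          simp only [hl']; congr 1 <;> omega
        rw [e2, e3]
      · simp
    calc Nat.card F ≤ Nat.card T := step1
      _ ≤ Fintype.card {A : Finset R // A.card ≤ l 1} * M := step2
      _ ≤ (∑ j ∈ range (l 1 + 1), (l 0).choose j) * M := Nat.mul_le_mul step3 (le_refl M)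
      _ = _ := by rw [hprod]

lemma sum_choose_le_aux (n k : ℕ) (hk : 0 < k) (hkn : k ≤ n) :
    ((∑ j ∈ range (k + 1), n.choose j : ℕ) : ℝ) ≤ (Real.exp 1 * n / k) ^ k := by
  have hn : 0 < n := hk.trans_le hkn
  set x : ℝ := (k : ℝ) / n with hxdef
  have hx0 : 0 < x := by positivity
  have hx1 : x ≤ 1 := by
    rw [div_le_one (by positivity)]
    exact_mod_cast hkn
  have key : x ^ k * ((∑ j ∈ range (k + 1), n.choose j : ℕ) : ℝ) ≤ Real.exp k := by
    have h1 : x ^ k * ((∑ j ∈ range (k + 1), n.choose j : ℕ) : ℝ)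
        ≤ ∑ j ∈ range (k + 1), x ^ j * 1 ^ (n - j) * n.choose j := by
      push_cast
      rw [Finset.mul_sum]
      refine Finset.sum_le_sum fun j hj => ?_
      rw [one_pow, mul_one]
      have hjk : j ≤ k := by simpa using Nat.lt_succ_iff.mp (mem_range.mp hj)
      have : x ^ k ≤ x ^ j := pow_le_pow_of_le_one hx0.le hx1 hjk
      exact mul_le_mul_of_nonneg_right this (by positivity)
    have h2 : ∑ j ∈ range (k + 1), x ^ j * 1 ^ (n - j) * n.choose j
        ≤ ∑ j ∈ range (n + 1), x ^ j * 1 ^ (n - j) * n.choose j := by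
      refine Finset.sum_le_sum_of_subset_of_nonneg ?_ fun j _ _ => by positivity
      exact Finset.range_subset_range.mpr (by omega)
    have h3 : ∑ j ∈ range (n + 1), x ^ j * 1 ^ (n - j) * n.choose j = (x + 1) ^ n :=
      (add_pow x 1 n).symm
    have h4 : (x + 1) ^ n ≤ Real.exp k := by
      have : (x + 1) ^ n ≤ Real.exp x ^ n :=
        pow_le_pow_left₀ (by positivity) (Real.add_one_le_exp x) n
      refine this.trans ?_
      rw [← Real.exp_nat_mul]
      have : (n : ℝ) * x = k := by
        rw [hxdef]
        field_simp
      rw [this]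
    calc _ ≤ _ := h1
      _ ≤ _ := h2
      _ = _ := h3
      _ ≤ _ := h4
  have hxk : 0 < x ^ k := by positivity
  rw [← le_div_iff₀' hxk] at key
  refine key.trans (le_of_eq ?_)
  rw [show (Real.exp 1 * n / k : ℝ) ^ k = Real.exp k * n ^ k / k ^ k by
    rw [div_pow, mul_pow, ← Real.exp_nat_mul, mul_one]]
  rw [hxdef, div_pow, div_div_eq_mul_div]

/-- **Combinatorial lemma.** Let `l 0 ≥ l 1 ≥ … ≥ l s` be positive integers and let `F` be the
family of functions `f : {1,…,l 0} → {0,1,…,s}` such that `#{r : f r ≥ i} ≤ l i` for every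
`1 ≤ i ≤ s`. Then `#F ≤ ∏_{i=1}^s (e·l (i−1) / l i)^(l i)`. -/
theorem combinatorial_lemma (s : ℕ) (l : ℕ → ℕ)
    (hpos : ∀ i ≤ s, 0 < l i) (hmono : ∀ i < s, l (i + 1) ≤ l i) :
    (Nat.card {f : Fin (l 0) → Fin (s + 1) //
        ∀ i, 1 ≤ i → i ≤ s → Nat.card {r : Fin (l 0) // i ≤ (f r : ℕ)} ≤ l i} : ℝ) ≤
      ∏ i ∈ Finset.Icc 1 s, (Real.exp 1 * l (i - 1) / l i) ^ (l i) := by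
  have h2 : ∀ i ∈ Icc 1 s, ((∑ j ∈ range (l i + 1), (l (i - 1)).choose j : ℕ) : ℝ)
      ≤ (Real.exp 1 * l (i - 1) / l i) ^ (l i) := by
    intro i hi
    obtain ⟨hi1, hi2⟩ := mem_Icc.mp hi
    have hk : 0 < l i := hpos i hi2
    have hkn : l i ≤ l (i - 1) := by
      have h3 := hmono (i - 1) (by omega)
      rwa [show i - 1 + 1 = i by omega] at h3
    exact sum_choose_le_aux (l (i - 1)) (l i) hk hkn
  have h1 : Nat.card {f : Fin (l 0) → Fin (s + 1) //
      ∀ i, 1 ≤ i → i ≤ s → Nat.card {r : Fin (l 0) // i ≤ (f r : ℕ)} ≤ l i}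
      ≤ ∏ i ∈ Icc 1 s, ∑ j ∈ range (l i + 1), (l (i - 1)).choose j :=
    count_le s l (Fin (l 0)) (by simp)
  calc (Nat.card {f : Fin (l 0) → Fin (s + 1) //
      ∀ i, 1 ≤ i → i ≤ s → Nat.card {r : Fin (l 0) // i ≤ (f r : ℕ)} ≤ l i} : ℝ)
      ≤ ((∏ i ∈ Icc 1 s, ∑ j ∈ range (l i + 1), (l (i - 1)).choose j : ℕ) : ℝ) :=
        Nat.cast_le.mpr h1
    _ = ∏ i ∈ Icc 1 s, ((∑ j ∈ range (l i + 1), (l (i - 1)).choose j : ℕ) : ℝ) := by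
        push_cast; rfl
    _ ≤ ∏ i ∈ Finset.Icc 1 s, (Real.exp 1 * l (i - 1) / l i) ^ (l i) :=
        Finset.prod_le_prod (fun i _ => by positivity) h2
end

section
/- Let Y_1,…,Y_s be nonnegative random variables and let u > 0. Then P(∑_{i=1}^s Y_i ≥ u) ≤ ∑_{(k_1,…,k_s) ∈ I_s} P(Y_1 ≥ k_1 u/(2s), …, Y_s ≥ k_s u/(2s)), where I_s := {(k_1,…,k_s) ∈ {0,1,…,s}^s : k_1 + … + k_s = s}. -/
open MeasureTheory

lemma exists_pointwise_le_sum_eq {ι : Type*} [DecidableEq ι] (A : Finset ι) (f : ι → ℕ)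
    (t : ℕ) (h : t ≤ ∑ i ∈ A, f i) :
    ∃ g : ι → ℕ, (∀ i ∈ A, g i ≤ f i) ∧ ∑ i ∈ A, g i = t := by
  induction A using Finset.induction_on generalizing t with
  | empty =>
    refine ⟨fun _ => 0, by simp, ?_⟩
    simp only [Finset.sum_empty] at h ⊢
    omega
  | @insert a A ha ih =>
    rw [Finset.sum_insert ha] at h
    obtain ⟨g, hg, hsum⟩ := ih (t - min t (f a)) (by omega)
    refine ⟨Function.update g a (min t (f a)), ?_, ?_⟩
    · intro i hi
      rcases eq_or_ne i a with rfl | hne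
      · simp [Function.update_self]
      · rw [Function.update_of_ne hne]
        exact hg i ((Finset.mem_insert.mp hi).resolve_left hne)
    · rw [Finset.sum_insert ha, Function.update_self]
      have heq : ∑ x ∈ A, Function.update g a (t ⊓ f a) x = ∑ x ∈ A, g x :=
        Finset.sum_congr rfl fun i hi =>
          Function.update_of_ne (by rintro rfl; exact ha hi) _ _
      rw [heq, hsum]
      omega

/-- **Union-bound lemma.** For nonnegative random variables `Y 1, …, Y s` and `u > 0`,
`P(∑ᵢ Y i ≥ u) ≤ ∑_{(k 1,…,k s) ∈ I_s} P(Y 1 ≥ k 1·u/(2s), …, Y s ≥ k s·u/(2s))`, where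
`I_s = {(k 1,…,k s) ∈ {0,…,s}^s : k 1 + … + k s = s}`. -/
theorem sum_tail_union_bound {Ω : Type*} [MeasurableSpace Ω] (μ : Measure Ω)
    [IsProbabilityMeasure μ] (s : ℕ) (Y : Fin s → Ω → ℝ) (hY : ∀ i ω, 0 ≤ Y i ω)
    (u : ℝ) (hu : 0 < u) :
    μ {ω | u ≤ ∑ i, Y i ω} ≤
      ∑ k ∈ Finset.univ.filter (fun k : Fin s → Fin (s + 1) => ∑ i, (k i : ℕ) = s),
        μ {ω | ∀ i, (k i : ℕ) * u / (2 * s) ≤ Y i ω} := by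
  classical
  have hsub : {ω | u ≤ ∑ i, Y i ω} ⊆
      ⋃ k ∈ Finset.univ.filter (fun k : Fin s → Fin (s + 1) => ∑ i, (k i : ℕ) = s),
        {ω | ∀ i, (k i : ℕ) * u / (2 * s) ≤ Y i ω} := by
    intro ω hω
    simp only [Set.mem_setOf_eq] at hω
    set m : Fin s → ℕ := fun i => min s ⌊2 * s * Y i ω / u⌋₊ with hm
    have hx_nonneg : ∀ i : Fin s, 0 ≤ 2 * (s : ℝ) * Y i ω / u := fun i =>
      div_nonneg (mul_nonneg (by positivity) (hY i ω)) hu.le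
    have hms : s ≤ ∑ i, m i := by
      by_cases hbig : ∃ i, s ≤ ⌊2 * s * Y i ω / u⌋₊
      · obtain ⟨i, hi⟩ := hbig
        calc s = m i := by simp [hm, min_eq_left hi]
          _ ≤ ∑ i, m i := Finset.single_le_sum (fun _ _ => Nat.zero_le _) (Finset.mem_univ i)
      · push_neg at hbig
        have hme : ∀ i, m i = ⌊2 * s * Y i ω / u⌋₊ := fun i =>
          min_eq_right (le_of_lt (hbig i))
        have hsumx : (2 * (s : ℝ) : ℝ) ≤ ∑ i, 2 * (s : ℝ) * Y i ω / u := by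
          rw [← Finset.sum_div, ← Finset.mul_sum]
          rw [le_div_iff₀ hu]
          have : 2 * (s : ℝ) * u ≤ 2 * (s : ℝ) * ∑ i, Y i ω :=
            mul_le_mul_of_nonneg_left hω (by positivity)
          linarith
        have hfloor : ∀ i : Fin s, 2 * (s : ℝ) * Y i ω / u < (⌊2 * s * Y i ω / u⌋₊ : ℝ) + 1 :=
          fun i => Nat.lt_floor_add_one _
        have hlt : (2 * (s : ℝ) : ℝ) < (∑ i, (⌊2 * s * Y i ω / u⌋₊ : ℝ)) + s := by
          calc (2 * (s : ℝ) : ℝ) ≤ ∑ i, 2 * (s : ℝ) * Y i ω / u := hsumx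
            _ < ∑ i, ((⌊2 * s * Y i ω / u⌋₊ : ℝ) + 1) := by
                rcases Nat.eq_zero_or_pos s with rfl | hs
                · exact absurd hω (by simpa using hu)
                · exact Finset.sum_lt_sum_of_nonempty
                    ⟨⟨0, hs⟩, Finset.mem_univ _⟩ (fun i _ => hfloor i)
            _ = (∑ i, (⌊2 * s * Y i ω / u⌋₊ : ℝ)) + s := by
                rw [Finset.sum_add_distrib]; simp
        have : ((s : ℝ)) ≤ ∑ i, (⌊2 * s * Y i ω / u⌋₊ : ℝ) := by linarith
        have := Nat.cast_le (α := ℝ).mpr (le_refl (∑ i, m i))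
        have hnat : (s : ℝ) ≤ ((∑ i, m i : ℕ) : ℝ) := by
          push_cast
          calc (s : ℝ) ≤ ∑ i, (⌊2 * s * Y i ω / u⌋₊ : ℝ) := ‹_›
            _ = ∑ i, (m i : ℝ) := by
                refine Finset.sum_congr rfl fun i _ => ?_
                rw [hme i]
        exact_mod_cast hnat
    obtain ⟨g, hg, hgsum⟩ := exists_pointwise_le_sum_eq Finset.univ m s hms
    have hgs : ∀ i, g i ≤ s := fun i =>
      le_trans (hg i (Finset.mem_univ i)) (min_le_left _ _)
    refine Set.mem_iUnion₂.mpr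
      ⟨fun i => (⟨g i, Nat.lt_succ_of_le (hgs i)⟩ : Fin (s + 1)), ?_, ?_⟩
    · simp only [Finset.mem_filter, Finset.mem_univ, true_and]
      simpa using hgsum
    · intro i
      simp only
      have hs : 0 < s := i.pos
      have hgle : (g i : ℝ) ≤ 2 * (s : ℝ) * Y i ω / u := by
        calc (g i : ℝ) ≤ (⌊2 * s * Y i ω / u⌋₊ : ℝ) := by
              exact_mod_cast le_trans (hg i (Finset.mem_univ i)) (min_le_right _ _)
          _ ≤ 2 * (s : ℝ) * Y i ω / u := Nat.floor_le (hx_nonneg i)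
      rw [div_le_iff₀ (by positivity)]
      rw [le_div_iff₀ hu] at hgle
      nlinarith
  calc μ {ω | u ≤ ∑ i, Y i ω} ≤ μ (⋃ k ∈ Finset.univ.filter
        (fun k : Fin s → Fin (s + 1) => ∑ i, (k i : ℕ) = s),
        {ω | ∀ i, (k i : ℕ) * u / (2 * s) ≤ Y i ω}) := measure_mono hsub
    _ ≤ _ := measure_biUnion_finset_le _ _
end

section
/- Let Y be a log-concave real random variable (not necessarily centered) with E Y² < ∞. Then for every t ≥ 0, P(|Y| ≥ t) ≤ exp(2 − t/(2e·(E Y²)^{1/2})). -/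
open MeasureTheory Real
open scoped Pointwise

noncomputable section

variable {Ω : Type*} [MeasurableSpace Ω]

/-- A real random variable `Y` is log-concave: for all nonempty compact sets `K, L ⊆ ℝ` and
`a ∈ [0,1]`, `P(Y ∈ aK + (1-a)L) ≥ P(Y ∈ K)^a * P(Y ∈ L)^(1-a)`. -/
def IsLogConcaveRV (μ : Measure Ω) (Y : Ω → ℝ) : Prop :=
  ∀ K L : Set ℝ, K.Nonempty → L.Nonempty → IsCompact K → IsCompact L →
    ∀ a : ℝ, 0 ≤ a → a ≤ 1 →
      (μ (Y ⁻¹' K)).toReal ^ a * (μ (Y ⁻¹' L)).toReal ^ (1 - a) ≤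
        (μ (Y ⁻¹' (a • K + (1 - a) • L))).toReal

/-- Borell-type inequality derived from log-concavity. -/
lemma borell_step (μ : Measure Ω) [IsProbabilityMeasure μ] (Y : Ω → ℝ)
    (hlc : IsLogConcaveRV μ Y) (t₀ : ℝ) (ht₀ : 0 < t₀) (l : ℝ) (hl : 1 ≤ l) :
    (μ {ω | l * t₀ ≤ |Y ω|}).toReal ^ (2 / (l + 1)) *
      (μ {ω | |Y ω| ≤ t₀}).toReal ^ (1 - 2 / (l + 1)) ≤
      (μ {ω | t₀ ≤ |Y ω|}).toReal := by
  have hl0 : (0:ℝ) < l := lt_of_lt_of_le one_pos hl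
  have hl1 : (0:ℝ) < l + 1 := by linarith
  set a : ℝ := 2 / (l + 1) with ha_def
  have ha0 : 0 < a := by positivity
  have ha1 : a ≤ 1 := by
    rw [ha_def, div_le_one hl1]; linarith
  have hlt0 : 0 < l * t₀ := by positivity
  set K : ℕ → Set ℝ := fun n =>
    Set.Icc (-(l * t₀ + n)) (-(l * t₀)) ∪ Set.Icc (l * t₀) (l * t₀ + n) with hK_def
  set L : Set ℝ := Set.Icc (-t₀) t₀ with hL_def
  have hLne : L.Nonempty := Set.nonempty_Icc.2 (by linarith)
  have hLc : IsCompact L := isCompact_Icc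
  -- the key inclusion and consequence, for each n
  have step : ∀ n : ℕ, (μ (Y ⁻¹' K n)).toReal ^ a * (μ (Y ⁻¹' L)).toReal ^ (1 - a) ≤
      (μ {ω | t₀ ≤ |Y ω|}).toReal := by
    intro n
    have hKne : (K n).Nonempty := ⟨l * t₀, Or.inr ⟨le_refl _, le_add_of_nonneg_right (Nat.cast_nonneg n)⟩⟩
    have hKc : IsCompact (K n) := isCompact_Icc.union isCompact_Icc
    have hmain := hlc (K n) L hKne hLne hKc hLc a ha0.le ha1
    refine hmain.trans ?_
    have hincl : a • K n + (1 - a) • L ⊆ {x : ℝ | t₀ ≤ |x|} := by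
      rintro z hz
      rw [Set.mem_add] at hz
      obtain ⟨u, hu, v, hv, rfl⟩ := hz
      obtain ⟨x, hx, rfl⟩ := hu
      obtain ⟨y, hy, rfl⟩ := hv
      have hxabs : l * t₀ ≤ |x| := by
        rcases hx with h | h
        · rw [abs_of_nonpos (by linarith [h.2])]; linarith [h.2]
        · rw [abs_of_nonneg (by linarith [h.1])]; exact h.1
      have hyabs : |y| ≤ t₀ := abs_le.2 ⟨hy.1, hy.2⟩
      simp only [smul_eq_mul, Set.mem_setOf_eq]
      have h1 : |a * x| ≤ |a * x + (1 - a) * y| + |(1 - a) * y| := by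
        calc |a * x| = |(a * x + (1 - a) * y) + (-((1 - a) * y))| := by ring_nf
          _ ≤ |a * x + (1 - a) * y| + |(-((1 - a) * y))| := abs_add_le _ _
          _ = |a * x + (1 - a) * y| + |(1 - a) * y| := by rw [abs_neg]
      have h2 : |a * x| = a * |x| := by rw [abs_mul, abs_of_nonneg ha0.le]
      have h3 : |(1 - a) * y| = (1 - a) * |y| := by
        rw [abs_mul, abs_of_nonneg (by linarith)]
      have h4 : a * (l * t₀) ≤ a * |x| := by nlinarith
      have h5 : (1 - a) * |y| ≤ (1 - a) * t₀ := by nlinarith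
      have h6 : a * (l * t₀) - (1 - a) * t₀ = t₀ := by
        rw [ha_def]; field_simp; ring
      linarith
    have hmono : μ (Y ⁻¹' (a • K n + (1 - a) • L)) ≤ μ {ω | t₀ ≤ |Y ω|} := by
      apply measure_mono
      intro ω hω
      exact hincl hω
    exact ENNReal.toReal_le_toReal (measure_ne_top _ _) (measure_ne_top _ _) |>.2 hmono
  -- take the limit in n
  have hKmono : Monotone fun n : ℕ => Y ⁻¹' K n := by
    intro m n hmn
    apply Set.preimage_mono
    have hc : (m : ℝ) ≤ n := Nat.cast_le.2 hmn
    exact Set.union_subset_union (Set.Icc_subset_Icc (by linarith) le_rfl)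
      (Set.Icc_subset_Icc le_rfl (by linarith))
  have hUnion : (⋃ n, Y ⁻¹' K n) = {ω | l * t₀ ≤ |Y ω|} := by
    ext ω
    simp only [Set.mem_iUnion, Set.mem_preimage, hK_def, Set.mem_union, Set.mem_Icc,
      Set.mem_setOf_eq]
    constructor
    · rintro ⟨n, h | h⟩
      · rw [abs_of_nonpos (by linarith [h.2])]; linarith [h.2]
      · rw [abs_of_nonneg (by linarith [h.1])]; exact h.1
    · intro h
      obtain ⟨n, hn⟩ := exists_nat_ge (|Y ω| - l * t₀)
      refine ⟨n, ?_⟩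
      rcases le_or_gt 0 (Y ω) with hy | hy
      · right
        rw [abs_of_nonneg hy] at h hn
        exact ⟨h, by linarith⟩
      · left
        rw [abs_of_neg hy] at h hn
        exact ⟨by linarith, by linarith⟩
  have htend : Filter.Tendsto (fun n => μ (Y ⁻¹' K n)) Filter.atTop
      (nhds (μ {ω | l * t₀ ≤ |Y ω|})) := by
    rw [← hUnion]
    exact tendsto_measure_iUnion_atTop hKmono
  have htendR : Filter.Tendsto (fun n => (μ (Y ⁻¹' K n)).toReal) Filter.atTop
      (nhds ((μ {ω | l * t₀ ≤ |Y ω|}).toReal)) :=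
    (ENNReal.tendsto_toReal (measure_ne_top _ _)).comp htend
  have htend2 : Filter.Tendsto
      (fun n => (μ (Y ⁻¹' K n)).toReal ^ a * (μ (Y ⁻¹' L)).toReal ^ (1 - a)) Filter.atTop
      (nhds ((μ {ω | l * t₀ ≤ |Y ω|}).toReal ^ a * (μ (Y ⁻¹' L)).toReal ^ (1 - a))) :=
    (htendR.rpow_const (Or.inr ha0.le)).mul_const _
  have hlim := le_of_tendsto htend2 (Filter.Eventually.of_forall step)
  have hLset : Y ⁻¹' L = {ω | |Y ω| ≤ t₀} := by
    ext ω; simp [hL_def, abs_le]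
  rwa [hLset] at hlim

/-- **`Ψ₁`-estimate for log-concave variables.** If `Y` is log-concave (not necessarily
centered) with `E Y² < ∞`, then for every `t ≥ 0`,
`P(|Y| ≥ t) ≤ exp(2 − t/(2e·(E Y²)^(1/2)))`. -/
theorem logconcave_psi1_tail (μ : Measure Ω) [IsProbabilityMeasure μ]
    (Y : Ω → ℝ) (hmeas : Measurable Y) (hlc : IsLogConcaveRV μ Y)
    (hint : Integrable (fun ω => (Y ω) ^ 2) μ) (t : ℝ) (ht : 0 ≤ t) :
    (μ {ω | t ≤ |Y ω|}).toReal ≤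
      Real.exp (2 - t / (2 * Real.exp 1 * Real.sqrt (∫ ω, (Y ω) ^ 2 ∂μ))) := by
  set I : ℝ := ∫ ω, (Y ω) ^ 2 ∂μ with hI_def
  have hI0 : 0 ≤ I := integral_nonneg fun ω => sq_nonneg _
  set σ : ℝ := Real.sqrt I with hσ_def
  have hσ0 : 0 ≤ σ := Real.sqrt_nonneg _
  have hμle1 : (μ {ω | t ≤ |Y ω|}).toReal ≤ 1 := by
    rw [← ENNReal.toReal_one]
    exact ENNReal.toReal_mono (by simp) prob_le_one
  rcases le_or_gt (t / (2 * Real.exp 1 * σ)) 2 with hcase | hcase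
  · -- trivial case: exponent is nonnegative
    calc (μ {ω | t ≤ |Y ω|}).toReal ≤ 1 := hμle1
      _ ≤ Real.exp (2 - t / (2 * Real.exp 1 * σ)) := Real.one_le_exp (by linarith)
  · -- main case
    have hσpos : 0 < σ := by
      rcases lt_or_eq_of_le hσ0 with h | h
      · exact h
      · exfalso
        rw [← h] at hcase
        simp at hcase
        linarith
    have hIpos : 0 < I := by
      by_contra h
      push_neg at h
      have : I = 0 := le_antisymm h hI0
      rw [hσ_def, this, Real.sqrt_zero] at hσpos
      exact lt_irrefl 0 hσpos
    have hepos : (0:ℝ) < Real.exp 1 := Real.exp_pos 1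
    have htlarge : 4 * Real.exp 1 * σ < t := by
      rw [lt_div_iff₀ (by positivity)] at hcase
      linarith
    have he2 : (2:ℝ) ≤ Real.exp 1 := by
      have := Real.exp_one_gt_d9; linarith
    have he3 : Real.exp 1 ≤ 3 := by
      have := Real.exp_one_lt_d9; linarith
    have hL3 : (1:ℝ) ≤ Real.log 3 :=
      (Real.le_log_iff_exp_le (by norm_num : (0:ℝ) < 3)).2 (by simpa using he3)
    have hL4 : (0:ℝ) ≤ Real.log 4 := Real.log_nonneg (by norm_num)
    have hσsq : σ ^ 2 = I := Real.sq_sqrt hI0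
    -- Markov's inequality at level 2σ
    have hset : {ω | 4 * I ≤ (Y ω) ^ 2} = {ω | 2 * σ ≤ |Y ω|} := by
      ext ω
      simp only [Set.mem_setOf_eq]
      constructor
      · intro h
        nlinarith [sq_abs (Y ω), abs_nonneg (Y ω), sq_nonneg (|Y ω| - 2 * σ),
          sq_nonneg (|Y ω| + 2 * σ)]
      · intro h
        nlinarith [sq_abs (Y ω), abs_nonneg (Y ω)]
    have hmarkov := mul_meas_ge_le_integral_of_nonneg (μ := μ)
      (Filter.Eventually.of_forall fun ω => sq_nonneg (Y ω)) hint (4 * I)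
    rw [hset, ← hI_def, measureReal_def] at hmarkov
    have hq : (μ {ω | 2 * σ ≤ |Y ω|}).toReal ≤ 1 / 4 := by
      nlinarith [hmarkov, ENNReal.toReal_nonneg (a := μ {ω | 2 * σ ≤ |Y ω|})]
    -- complement bound
    have hmeasset : MeasurableSet {ω | |Y ω| ≤ 2 * σ} := by
      have : {ω | |Y ω| ≤ 2 * σ} = Y ⁻¹' Set.Icc (-(2 * σ)) (2 * σ) := by
        ext ω; simp [abs_le]
      rw [this]; exact hmeas measurableSet_Icc
    have hcompl : {ω | |Y ω| ≤ 2 * σ}ᶜ ⊆ {ω | 2 * σ ≤ |Y ω|} := by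
      intro ω hω
      simp only [Set.mem_compl_iff, Set.mem_setOf_eq, not_le] at hω
      exact le_of_lt hω
    have hsum : (μ {ω | |Y ω| ≤ 2 * σ}).toReal + (μ {ω | |Y ω| ≤ 2 * σ}ᶜ).toReal = 1 := by
      rw [← ENNReal.toReal_add (measure_ne_top _ _) (measure_ne_top _ _),
        measure_add_measure_compl hmeasset]
      simp
    have hcomplle : (μ {ω | |Y ω| ≤ 2 * σ}ᶜ).toReal ≤ 1 / 4 :=
      le_trans (ENNReal.toReal_mono (measure_ne_top _ _) (measure_mono hcompl)) hq
    have hp : 3 / 4 ≤ (μ {ω | |Y ω| ≤ 2 * σ}).toReal := by linarith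
    -- apply the Borell-type inequality
    set l : ℝ := t / (2 * σ) with hl_def
    have h2σpos : (0:ℝ) < 2 * σ := by linarith
    have hl1 : 1 ≤ l := by
      rw [hl_def, le_div_iff₀ h2σpos]; nlinarith
    have hlt : l * (2 * σ) = t := by
      rw [hl_def]; field_simp
    have hb := borell_step μ Y hlc (2 * σ) h2σpos l hl1
    rw [hlt] at hb
    set m : ℝ := (μ {ω | t ≤ |Y ω|}).toReal with hm_def
    set p : ℝ := (μ {ω | |Y ω| ≤ 2 * σ}).toReal with hp_def
    set q : ℝ := (μ {ω | 2 * σ ≤ |Y ω|}).toReal with hq_def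
    set a : ℝ := 2 / (l + 1) with ha_def
    have hl1pos : (0:ℝ) < l + 1 := by linarith
    have ha0 : 0 < a := by rw [ha_def]; positivity
    have ha1 : a ≤ 1 := by rw [ha_def, div_le_one hl1pos]; linarith
    have hm0 : 0 ≤ m := ENNReal.toReal_nonneg
    have hstep1 : m ^ a * (3 / 4 : ℝ) ^ (1 - a) ≤ 1 / 4 := by
      have h34 : ((3:ℝ) / 4) ^ (1 - a) ≤ p ^ (1 - a) :=
        Real.rpow_le_rpow (by norm_num) hp (by linarith)
      calc m ^ a * (3 / 4 : ℝ) ^ (1 - a) ≤ m ^ a * p ^ (1 - a) :=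
            mul_le_mul_of_nonneg_left h34 (Real.rpow_nonneg hm0 a)
        _ ≤ q := hb
        _ ≤ 1 / 4 := hq
    have h34pos : (0:ℝ) < (3 / 4 : ℝ) ^ (1 - a) := Real.rpow_pos_of_pos (by norm_num) _
    have hstep2 : m ^ a ≤ (1 / 4 : ℝ) * (3 / 4 : ℝ) ^ (a - 1) := by
      rw [show (a - 1 : ℝ) = -(1 - a) by ring, Real.rpow_neg (by norm_num)]
      rw [← div_eq_mul_inv, le_div_iff₀ h34pos]
      exact hstep1
    have hstep3 : m ≤ ((1 / 4 : ℝ) * (3 / 4 : ℝ) ^ (a - 1)) ^ a⁻¹ := by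
      have := Real.rpow_le_rpow (Real.rpow_nonneg hm0 a) hstep2 (inv_nonneg.2 ha0.le)
      rwa [Real.rpow_rpow_inv hm0 ha0.ne'] at this
    have hainv : a⁻¹ = (l + 1) / 2 := by rw [ha_def, inv_div]
    have haexp : (a - 1) * a⁻¹ = (1 - l) / 2 := by
      rw [hainv, ha_def]; field_simp; ring
    have hrhs : ((1 / 4 : ℝ) * (3 / 4 : ℝ) ^ (a - 1)) ^ a⁻¹ =
        Real.exp (Real.log (1 / 4) * ((l + 1) / 2) + Real.log (3 / 4) * ((1 - l) / 2)) := by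
      rw [Real.mul_rpow (by norm_num) (Real.rpow_nonneg (by norm_num) _)]
      rw [← Real.rpow_mul (by norm_num : (0:ℝ) ≤ 3 / 4), haexp, hainv,
        Real.rpow_def_of_pos (by norm_num : (0:ℝ) < 1 / 4),
        Real.rpow_def_of_pos (by norm_num : (0:ℝ) < 3 / 4), ← Real.exp_add]
    have hexp_eq : t / (2 * Real.exp 1 * σ) = l / Real.exp 1 := by
      rw [hl_def, div_div]; ring_nf
    rw [hexp_eq]
    refine hstep3.trans ?_
    rw [hrhs]
    apply Real.exp_le_exp.2
    have hlog14 : Real.log (1 / 4) = -Real.log 4 := by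
      rw [one_div, Real.log_inv]
    have hlog34 : Real.log (3 / 4) = Real.log 3 - Real.log 4 :=
      Real.log_div (by norm_num) (by norm_num)
    have hdivle : l / Real.exp 1 ≤ l / 2 :=
      div_le_div_of_nonneg_left (by linarith) two_pos he2
    have hmul : (1 - l) * Real.log 3 ≤ (1 - l) * 1 :=
      mul_le_mul_of_nonpos_left hL3 (by linarith)
    rw [hlog14, hlog34]
    linarith [hmul, hdivle, hL4, hl1]
end
end
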